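/- Let C₀(Q) ⊆ A be a central non-degenerate inclusion, let q ∈ Q be such that the quotient A/J^unif_q is simple, and let ψ be any state of A whose restriction to C₀(Q) is the evaluation map ev_q : f ↦ f(q). Then K_ψ = {a ∈ A : ψ(x a y) = 0 for all x, y ∈ A} equals J^unif_q. -/

import Mathlib

/-!
Positivity of `ψ` gives the Cauchy–Schwarz inequality for `⟪a, b⟫ = ψ (star a * b)`, so
`ψ (star a * b) = 0` for all `a` as soon as `ψ (star b * b) = 0`. For `f` with `f q = 0` we have
`ψ (star (ι f) * ι f) = |f q|² = 0`, and since `ι f` is central, `ψ (x * ι f * y) = ψ (x * y * ι f)`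
vanishes: the generators of `J^unif_q` lie in the closed ideal `K_ψ`, hence `J^unif_q ⊆ K_ψ`.
Simplicity of `A / J^unif_q` leaves `K_ψ = J^unif_q` or `K_ψ = A`, and the latter would force
`ψ = 0`, because `ψ a` is a limit of values `ψ (e * a * e')` along an approximate unit.
-/

open scoped ComplexOrder
open ZeroAtInfty

def closedIdealGenBy {A : Type*} [NonUnitalCStarAlgebra A] (S : Set A) : Set A :=
  ⋂₀ {L : Set A | (∃ I : TwoSidedIdeal A, (I : Set A) = L) ∧ IsClosed L ∧ S ⊆ L}

/-- `J^unif_q`: the closed two-sided ideal of `A` generated by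
`C_{0,q}(Q) = {f ∈ C₀(Q) : f q = 0}` (viewed in `A` via the inclusion `ι`). -/
def Junif {Q : Type*} [TopologicalSpace Q] [LocallyCompactSpace Q] [T2Space Q]
    {A : Type*} [NonUnitalCStarAlgebra A] (ι : C₀(Q, ℂ) →⋆ₙₐ[ℂ] A) (q : Q) : Set A :=
  closedIdealGenBy {a : A | ∃ f : C₀(Q, ℂ), f q = 0 ∧ a = ι f}

/-- `A / J` is a simple C*-algebra, encoded via the correspondence between closed two-sided
ideals of `A / J` and closed two-sided ideals of `A` containing `J`. -/
def QuotientSimpleBy {A : Type*} [NonUnitalCStarAlgebra A] (J : Set A) : Prop :=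
  J ≠ Set.univ ∧ ∀ L : TwoSidedIdeal A, IsClosed (L : Set A) → J ⊆ (L : Set A) →
    (L : Set A) = J ∨ (L : Set A) = Set.univ

def IsState {E : Type*} [SeminormedAddCommGroup E] [NormedSpace ℂ E] [Mul E] [Star E]
    (φ : E →L[ℂ] ℂ) : Prop :=
  (∀ a : E, 0 ≤ φ (star a * a)) ∧ ‖φ‖ = 1

def Kset {E F : Type*} [Mul E] [Zero F] (ψ : E → F) : Set E :=
  {a | ∀ x y : E, ψ (x * a * y) = 0}

open Filter Topology

section Kset

variable {R M F : Type*}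

def ksetIdeal [NonUnitalRing R] [AddCommGroup M] [FunLike F R M] [AddMonoidHomClass F R M]
    (ψ : F) : TwoSidedIdeal R :=
  .mk' (Kset ψ) (fun x y => by simp)
    (fun ha hb x y => by rw [mul_add, add_mul, map_add, ha x y, hb x y, add_zero])
    (fun ha x y => by rw [mul_neg, neg_mul, map_neg, ha x y, neg_zero])
    (fun {b} _ ha x y => by simpa only [mul_assoc] using ha (x * b) y)
    (fun {_ b} ha x y => by simpa only [mul_assoc] using ha x (b * y))

@[simp]
lemma coe_ksetIdeal [NonUnitalRing R] [AddCommGroup M] [FunLike F R M]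
    [AddMonoidHomClass F R M] (ψ : F) : (ksetIdeal ψ : Set R) = Kset ψ :=
  TwoSidedIdeal.coe_mk' ..

lemma isClosed_kset [Mul R] [TopologicalSpace R] [ContinuousMul R] [Zero M] [TopologicalSpace M]
    [T1Space M] {ψ : R → M} (hψ : Continuous ψ) : IsClosed (Kset ψ) := by
  simp only [Kset, Set.ofPred_forall]
  exact isClosed_iInter fun x => isClosed_iInter fun y =>
    isClosed_singleton.preimage (hψ.comp (by fun_prop))

lemma map_eq_zero_of_mem_kset [Mul R] [TopologicalSpace R] [Zero M] [TopologicalSpace M]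
    [T2Space M] {l : Filter R} (hl : l.IsApproximateUnit) {ψ : R → M} (hψ : Continuous ψ)
    {a : R} (ha : a ∈ Kset ψ) : ψ a = 0 := by
  have := hl.neBot
  have hleft (x : R) : ψ (x * a) = 0 :=
    tendsto_nhds_unique ((hψ.tendsto _).comp (hl.tendsto_mul_left (x * a)))
      (tendsto_const_nhds.congr fun e => (ha x e).symm)
  exact tendsto_nhds_unique ((hψ.tendsto _).comp (hl.tendsto_mul_right a))
    (tendsto_const_nhds.congr fun e => (hleft e).symm)

end Kset

section CStarAlgebra

variable {A : Type*} [NonUnitalCStarAlgebra A]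

lemma CStarAlgebra.exists_isApproximateUnit : ∃ l : Filter A, l.IsApproximateUnit :=
  let := CStarAlgebra.spectralOrder A
  have := CStarAlgebra.spectralOrderedRing A
  ⟨_, (CStarAlgebra.increasingApproximateUnit A).toIsApproximateUnit⟩

lemma map_star_mul_eq_zero_of_map_star_mul_self_eq_zero (ψ : A →ₗ[ℂ] ℂ)
    (hψ : ∀ a, 0 ≤ ψ (star a * a)) {b : A} (hb : ψ (star b * b) = 0) (a : A) :
    ψ (star a * b) = 0 := by
  -- Cauchy–Schwarz in the GNS pre-Hilbert space of `ψ`, seen as a positive map for the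
  -- spectral order.
  let := CStarAlgebra.spectralOrder A
  have := CStarAlgebra.spectralOrderedRing A
  let f : A →ₚ[ℂ] ℂ := .mk₀ ψ fun x hx => by
    obtain ⟨s, rfl⟩ := CStarAlgebra.nonneg_iff_eq_star_mul_self.mp hx
    exact hψ s
  have hnorm : ‖f.toPreGNS b‖ = 0 := by
    have : (‖f.toPreGNS b‖ : ℂ) ^ 2 = 0 := (f.preGNS_norm_sq _).trans hb
    exact_mod_cast pow_eq_zero_iff two_ne_zero |>.mp this
  have := norm_inner_le_norm (𝕜 := ℂ) (f.toPreGNS a) (f.toPreGNS b)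
  rw [hnorm, mul_zero, norm_le_zero_iff] at this
  exact this

lemma mem_kset_of_commute {ψ : A →ₗ[ℂ] ℂ} (hψ : ∀ a, 0 ≤ ψ (star a * a)) {z : A}
    (hz : ∀ a, z * a = a * z) (hzz : ψ (star z * z) = 0) : z ∈ Kset ψ := by
  intro x y
  rw [mul_assoc, hz, ← mul_assoc, ← star_star (x * y)]
  exact map_star_mul_eq_zero_of_map_star_mul_self_eq_zero ψ hψ hzz _

lemma kset_ne_univ {ψ : A →L[ℂ] ℂ} (hψ : ψ ≠ 0) : Kset ψ ≠ Set.univ := by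
  obtain ⟨l, hl⟩ := CStarAlgebra.exists_isApproximateUnit (A := A)
  intro h
  exact hψ <| ContinuousLinearMap.ext fun a =>
    map_eq_zero_of_mem_kset hl ψ.continuous (h ▸ Set.mem_univ a)

lemma IsState.ne_zero {ψ : A →L[ℂ] ℂ} (hψ : IsState ψ) : ψ ≠ 0 := by
  rintro rfl
  simpa using hψ.2

lemma closedIdealGenBy_subset {S : Set A} (I : TwoSidedIdeal A) (hI : IsClosed (I : Set A))
    (hSI : S ⊆ I) : closedIdealGenBy S ⊆ I :=
  Set.sInter_subset_of_mem ⟨⟨I, rfl⟩, hI, hSI⟩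

lemma QuotientSimpleBy.eq_of_subset {J : Set A} (hJ : QuotientSimpleBy J) (I : TwoSidedIdeal A)
    (hI : IsClosed (I : Set A)) (hJI : J ⊆ I) (hI_ne : (I : Set A) ≠ Set.univ) :
    (I : Set A) = J :=
  (hJ.2 I hI hJI).resolve_right hI_ne

end CStarAlgebra

theorem stmt7_general {Q : Type*} [TopologicalSpace Q] [LocallyCompactSpace Q] [T2Space Q]
    {A : Type*} [NonUnitalCStarAlgebra A]
    (ι : C₀(Q, ℂ) →⋆ₙₐ[ℂ] A)
    (hcentral : ∀ (f : C₀(Q, ℂ)) (a : A), ι f * a = a * ι f)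
    (q : Q) (hsimple : QuotientSimpleBy (Junif ι q))
    (ψ : A →L[ℂ] ℂ) (hψ : IsState ψ)
    (hres : ∀ f : C₀(Q, ℂ), ψ (ι f) = f q) :
    Kset ⇑ψ = Junif ι q := by
  have hgen : {a : A | ∃ f : C₀(Q, ℂ), f q = 0 ∧ a = ι f} ⊆ Kset ψ := by
    rintro _ ⟨f, hfq, rfl⟩
    refine mem_kset_of_commute (ψ := ψ.toLinearMap) hψ.1 (hcentral f) ?_
    simp [← map_star, ← map_mul, hres, hfq]
  have hclosed : IsClosed (ksetIdeal ψ : Set A) := by simpa using isClosed_kset ψ.continuous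
  have hJK : Junif ι q ⊆ ksetIdeal ψ := closedIdealGenBy_subset _ hclosed (by simpa using hgen)
  simpa using hsimple.eq_of_subset _ hclosed hJK (by simpa using kset_ne_univ hψ.ne_zero)

/-- For a central non-degenerate inclusion `C₀(Q) ⊆ A`, a point `q` with
`A/J^unif_q` simple, and any state `ψ` of `A` restricting to `ev_q` on `C₀(Q)`, one has
`K_ψ = J^unif_q`. -/
theorem stmt7 {Q : Type*} [TopologicalSpace Q] [LocallyCompactSpace Q] [T2Space Q]
    {A : Type*} [NonUnitalCStarAlgebra A]
    (ι : C₀(Q, ℂ) →⋆ₙₐ[ℂ] A) (hisom : Isometry ι)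
    (hcentral : ∀ (f : C₀(Q, ℂ)) (a : A), ι f * a = a * ι f)
    (hnondeg : closure
      (Submodule.span ℂ {x : A | ∃ (f : C₀(Q, ℂ)) (a : A), x = ι f * a} : Set A) = Set.univ)
    (q : Q) (hsimple : QuotientSimpleBy (Junif ι q))
    (ψ : A →L[ℂ] ℂ) (hψ : IsState ψ)
    (hres : ∀ f : C₀(Q, ℂ), ψ (ι f) = f q) :
    Kset ⇑ψ = Junif ι q :=
  stmt7_general ι hcentral q hsimple ψ hψ hres
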